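/- Let A : ℕ → ℕ be defined by A(0) = 1, A(1) = 2, and A(n) = 1 + C(A(n−2)+1, 2) + A(n−2)·(A(n−1) − A(n−2)) for n ≥ 2, and let φ = (1+√5)/2. Then there exist real constants K₁ > 0 and K₂ > 1 such that A(n)/(K₁·K₂^(φⁿ)) tends to 1 as n → ∞. -/

import Mathlib

open Filter

def A : ℕ → ℕ
  | 0 => 1
  | 1 => 2
  | n + 2 => 1 + Nat.choose (A n + 1) 2 + A n * (A (n + 1) - A n)

noncomputable def φ : ℝ := (1 + Real.sqrt 5) / 2

/-!
Put `b n = log (A n)`. The recurrence reads `A (n+2) = A n * A (n+1) * (1 + O(1 / A (n-1)))`,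
and `A` grows at least geometrically, so `b (n+2) = b (n+1) + b n + ε n` with `ε` summable.
For such a perturbed Fibonacci recurrence, `u n = b (n+1) - φ * b n` satisfies
`u (n+1) = ψ * u n + ε n` with `ψ = 1 - φ`, `|ψ| < 1`, hence `u` is absolutely summable.
Then `b n / φ ^ n` converges to some `c`, and `|b n - c * φ ^ n|` is at most the tail
`∑_{k ≥ n} |u k|`.
Finally `c > 0` because `b n → ∞`, and `K₁ = 1`, `K₂ = exp c` work.
-/

open Topology Real

theorem summable_of_le_mul_add {a e : ℕ → ℝ} {r : ℝ} (ha : ∀ n, 0 ≤ a n)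
    (hr : r < 1) (he₀ : ∀ n, 0 ≤ e n) (he : Summable e)
    (h : ∀ n, a (n + 1) ≤ r * a n + e n) :
    Summable a := by
  refine summable_of_sum_range_le ha (c := (a 0 + ∑' n, e n) / (1 - r)) fun N => ?_
  rw [le_div_iff₀ (sub_pos.2 hr)]
  have hmono : ∑ k ∈ Finset.range N, a k ≤ ∑ k ∈ Finset.range (N + 1), a k :=
    Finset.sum_le_sum_of_subset_of_nonneg (by simp) fun k _ _ => ha k
  have hstep :
      ∑ k ∈ Finset.range N, a (k + 1) ≤ r * ∑ k ∈ Finset.range N, a k + ∑' n, e n :=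
    calc ∑ k ∈ Finset.range N, a (k + 1)
        ≤ ∑ k ∈ Finset.range N, (r * a k + e k) := Finset.sum_le_sum fun k _ => h k
      _ ≤ r * ∑ k ∈ Finset.range N, a k + ∑' n, e n := by
        rw [Finset.sum_add_distrib, Finset.mul_sum]
        gcongr
        exact he.sum_le_tsum _ fun k _ => he₀ k
  rw [Finset.sum_range_succ'] at hmono
  linarith

theorem exists_tendsto_sub_mul_pow {b : ℕ → ℝ} {x : ℝ} (hx : 1 ≤ x)
    (hb : Summable fun n => |b (n + 1) - x * b n|) :
    ∃ c, Tendsto (fun n => b n - c * x ^ n) atTop (𝓝 0) := by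
  set u := fun n => b (n + 1) - x * b n
  set v := fun n : ℕ => u n / x ^ (n + 1)
  have hxpow (n : ℕ) : 1 ≤ x ^ n := one_le_pow₀ hx
  have hv_le (n k : ℕ) : ‖x ^ n * v (k + n)‖ ≤ |u (k + n)| := by
    have hpos (m : ℕ) : 0 < x ^ m := by linarith [hxpow m]
    rw [norm_eq_abs, abs_mul, abs_div, abs_of_pos (hpos n), abs_of_pos (hpos _),
      mul_div_assoc', div_le_iff₀ (hpos _), show x ^ (k + n + 1) = x ^ n * x ^ (k + 1) by ring]
    have := mul_nonneg (hpos n).le (abs_nonneg (u (k + n)))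
    nlinarith [mul_nonneg (sub_nonneg.2 (hxpow (k + 1))) this]
  have hv : Summable v := by
    refine .of_norm_bounded hb fun n => ?_
    simpa using hv_le 0 n
  have hb_eq (n : ℕ) : b n = x ^ n * (b 0 + ∑ k ∈ Finset.range n, v k) := by
    induction n with
    | zero => simp
    | succ n ih =>
      have hvn : x ^ (n + 1) * v n = b (n + 1) - x * b n :=
        mul_div_cancel₀ _ (by linarith [hxpow (n + 1)])
      rw [Finset.sum_range_succ, ← add_assoc, mul_add, hvn, pow_succ', mul_assoc, ← ih]
      ring
  refine ⟨b 0 + ∑' k, v k, ?_⟩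
  have htail (n : ℕ) : b n - (b 0 + ∑' k, v k) * x ^ n = -∑' k, x ^ n * v (k + n) := by
    rw [hb_eq n, ← hv.sum_add_tsum_nat_add n, tsum_mul_left]
    ring
  refine squeeze_zero_norm (fun n => ?_) (tendsto_sum_nat_add fun k => |u k|)
  rw [htail, norm_neg]
  exact tsum_of_norm_bounded ((summable_nat_add_iff n).2 hb).hasSum fun k => hv_le n k

theorem exists_tendsto_sub_mul_goldenRatio_pow {b : ℕ → ℝ}
    (hb : Summable fun n => b (n + 2) - b (n + 1) - b n) :
    ∃ c, Tendsto (fun n => b n - c * goldenRatio ^ n) atTop (𝓝 0) := by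
  refine exists_tendsto_sub_mul_pow one_lt_goldenRatio.le
    (summable_of_le_mul_add (fun n => abs_nonneg _) (r := |goldenConj|) ?_
      (fun n => abs_nonneg _) hb.abs fun n => ?_)
  · exact abs_lt.2 ⟨neg_one_lt_goldenConj, goldenConj_neg.trans one_pos⟩
  · have h : b (n + 1 + 1) - goldenRatio * b (n + 1)
        = goldenConj * (b (n + 1) - goldenRatio * b n) + (b (n + 2) - b (n + 1) - b n) := by
      linear_combination
        (-b (n + 1)) * goldenRatio_add_goldenConj + b n * goldenRatio_mul_goldenConj
    rw [h, ← abs_mul]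
    exact abs_add_le _ _

theorem A_pos_and_lt_succ (n : ℕ) : 0 < A n ∧ A n < A (n + 1) := by
  induction n with
  | zero => decide
  | succ n ih =>
    obtain ⟨hpos, hlt⟩ := ih
    refine ⟨hpos.trans hlt, ?_⟩
    have hchoose : A n ≤ (A n + 1).choose 2 := by
      rw [Nat.choose_succ_succ, Nat.choose_one_right]
      exact Nat.le_add_right _ _
    have hmul : A (n + 1) - A n ≤ A n * (A (n + 1) - A n) := Nat.le_mul_of_pos_left _ hpos
    change A (n + 1) < 1 + (A n + 1).choose 2 + A n * (A (n + 1) - A n)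
    omega

theorem strictMono_A : StrictMono A :=
  strictMono_nat_of_lt_succ fun n => (A_pos_and_lt_succ n).2

theorem A_pos (n : ℕ) : 0 < A n := (A_pos_and_lt_succ n).1

theorem succ_le_A (n : ℕ) : n + 1 ≤ A n := by
  induction n with
  | zero => decide
  | succ n ih => exact ih.trans_lt (strictMono_A n.lt_succ_self)

theorem cast_A_add_two (n : ℕ) :
    (A (n + 2) : ℝ) = A n * A (n + 1) - (A n - 2) * (A n + 1) / 2 := by
  change ((1 + (A n + 1).choose 2 + A n * (A (n + 1) - A n) : ℕ) : ℝ) = _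
  push_cast [Nat.cast_choose_two, (strictMono_A n.lt_succ_self).le]
  ring

theorem A_mul_A_succ_le_two_mul_A (n : ℕ) : (A n * A (n + 1) : ℝ) ≤ 2 * A (n + 2) := by
  have hle : (A n : ℝ) ≤ A (n + 1) := by exact_mod_cast (strictMono_A n.lt_succ_self).le
  have hpos : (0 : ℝ) < A n := by exact_mod_cast A_pos n
  rw [cast_A_add_two]
  nlinarith

theorem A_add_two_le_mul (n : ℕ) (h : 2 ≤ A n) : (A (n + 2) : ℝ) ≤ A n * A (n + 1) := by
  have h' : (2 : ℝ) ≤ A n := by exact_mod_cast h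
  rw [cast_A_add_two]
  nlinarith

theorem summable_inv_A : Summable fun n => (A n : ℝ)⁻¹ := by
  refine summable_of_ratio_norm_eventually_le (r := 1 / 2) (by norm_num) ?_
  filter_upwards [eventually_ge_atTop 4] with n hn
  obtain ⟨m, rfl⟩ : ∃ m, n = m + 1 := ⟨n - 1, by omega⟩
  have h4 : (4 : ℝ) ≤ A m := by exact_mod_cast (show 4 ≤ m + 1 by omega).trans (succ_le_A m)
  have hpos : (0 : ℝ) < A (m + 1) := by exact_mod_cast A_pos _
  have := A_mul_A_succ_le_two_mul_A m
  rw [norm_of_nonneg (by positivity), norm_of_nonneg (by positivity),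
    show (1 / 2 : ℝ) * (A (m + 1) : ℝ)⁻¹ = (2 * A (m + 1) : ℝ)⁻¹ by ring]
  exact inv_anti₀ (by positivity) (by nlinarith)

theorem abs_log_le_two_mul {q x : ℝ} (hx : x ≤ 1 / 2) (hxq : 1 - x ≤ q) (hq : q ≤ 1) :
    |log q| ≤ 2 * x := by
  have hq₀ : 0 < q := by linarith
  rw [abs_of_nonpos (log_nonpos hq₀.le hq), neg_le]
  have hinv : q⁻¹ ≤ 1 + 2 * x := by
    rw [inv_le_iff_one_le_mul₀ hq₀]
    nlinarith
  linarith [one_sub_inv_le_log_of_pos hq₀]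

theorem abs_log_A_div_le (n : ℕ) (h : 2 ≤ A n) :
    |log (A (n + 3) / (A (n + 1) * A (n + 2)))| ≤ 2 * (A n : ℝ)⁻¹ := by
  have h₀ : (2 : ℝ) ≤ A n := by exact_mod_cast h
  have h₁ : (2 : ℝ) ≤ A (n + 1) := by exact_mod_cast h.trans (strictMono_A n.lt_succ_self).le
  have h₂ : (0 : ℝ) < A (n + 2) := by exact_mod_cast A_pos _
  have hgrowth : (A (n + 1) : ℝ) ^ 2 ≤ 2 * (A n : ℝ)⁻¹ * A (n + 1) * A (n + 2) :=
    calc (A (n + 1) : ℝ) ^ 2 = (A n : ℝ)⁻¹ * A (n + 1) * (A n * A (n + 1)) := by field_simp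
      _ ≤ (A n : ℝ)⁻¹ * A (n + 1) * (2 * A (n + 2)) :=
          mul_le_mul_of_nonneg_left (A_mul_A_succ_le_two_mul_A n) (by positivity)
      _ = 2 * (A n : ℝ)⁻¹ * A (n + 1) * A (n + 2) := by ring
  refine abs_log_le_two_mul (by rw [inv_le_comm₀ (by positivity) (by norm_num)]; linarith)
    ?_ (div_le_one_of_le₀ (A_add_two_le_mul (n + 1) (by exact_mod_cast h₁)) (by positivity))
  rw [le_div_iff₀ (by positivity), cast_A_add_two (n + 1)]
  linarith

theorem summable_log_A_add_two_sub :
    Summable fun n => log (A (n + 2)) - log (A (n + 1)) - log (A n) := by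
  rw [← summable_nat_add_iff 1]
  refine .of_norm_bounded_eventually (summable_inv_A.mul_left 2) ?_
  rw [Nat.cofinite_eq_atTop]
  filter_upwards [eventually_ge_atTop 1] with n hn
  have hpos (k : ℕ) : (A k : ℝ) ≠ 0 := by exact_mod_cast (A_pos k).ne'
  have h := abs_log_A_div_le n ((succ_le_A 1).trans (strictMono_A.monotone hn))
  rw [log_div (hpos _) (mul_ne_zero (hpos _) (hpos _)), log_mul (hpos _) (hpos _)] at h
  rw [norm_eq_abs]
  convert h using 2
  ring

theorem stmt_10 :
    ∃ K₁ K₂ : ℝ, 0 < K₁ ∧ 1 < K₂ ∧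
      Tendsto (fun n : ℕ => (A n : ℝ) / (K₁ * K₂ ^ (φ ^ n))) atTop (nhds 1) := by
  obtain ⟨c, hc⟩ := exists_tendsto_sub_mul_goldenRatio_pow (b := fun n => log (A n))
    summable_log_A_add_two_sub
  have hlog : Tendsto (fun n => log (A n)) atTop atTop :=
    tendsto_log_atTop.comp (tendsto_natCast_atTop_atTop.comp strictMono_A.tendsto_atTop)
  have hc_pos : 0 < c := by
    by_contra! hc_nonpos
    refine not_tendsto_nhds_of_tendsto_atTop (tendsto_atTop_mono (fun n => ?_) hlog) 0 hc
    linarith [mul_nonpos_of_nonpos_of_nonneg hc_nonpos (pow_nonneg goldenRatio_pos.le n)]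
  refine ⟨1, exp c, one_pos, one_lt_exp_iff.2 hc_pos, ?_⟩
  have hA (n : ℕ) : (A n : ℝ) / (1 * exp c ^ φ ^ n) = exp (log (A n) - c * φ ^ n) := by
    rw [one_mul, ← exp_mul, exp_sub, exp_log (by exact_mod_cast A_pos n)]
  have hexp := (continuous_exp.tendsto 0).comp hc
  rw [exp_zero] at hexp
  exact hexp.congr fun n => (hA n).symm
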